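/- Let H be a torsion-free bialgebra over ℤ such that for every prime p the map from primitive elements of H to primitive elements of H/pH is surjective. Then every primitive element of H is liftable. -/

import Mathlib

open TensorProduct Coalgebra

/-- `x` is primitive: `Δ(x) = x ⊗ 1 + 1 ⊗ x`. -/
def IsPrimitive {H : Type*} [Ring H] [Coalgebra ℤ H] (x : H) : Prop :=
  comul (R := ℤ) x = x ⊗ₜ[ℤ] 1 + 1 ⊗ₜ[ℤ] x

/-- `x` is liftable. -/
def Liftable {H : Type*} [Ring H] [Coalgebra ℤ H] (x : H) : Prop :=
  ∃ a : ℕ → H, a 0 = 1 ∧ a 1 = x ∧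
    ∀ n, comul (R := ℤ) (a n) = ∑ m ∈ Finset.range (n + 1), a m ⊗ₜ[ℤ] a (n - m)

open Finset

/-! ### Auxiliary results -/

/-- A torsion-free abelian group is flat over `ℤ`. -/
theorem liftAux.flat_of_tf (M : Type*) [AddCommGroup M] [NoZeroSMulDivisors ℤ M] :
    Module.Flat ℤ M := by
  rw [Module.Flat.iff_rTensor_injective']
  intro I
  obtain ⟨g, hg⟩ : Submodule.IsPrincipal I := inferInstance
  have hgI : g ∈ I := by rw [hg]; exact Submodule.mem_span_singleton_self g
  set G : I := ⟨g, hgI⟩ with hG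
  have surj : ∀ x : (I : Submodule ℤ ℤ) ⊗[ℤ] M, ∃ m : M, x = G ⊗ₜ[ℤ] m := by
    intro x
    refine x.induction_on ⟨0, (tmul_zero _ _).symm⟩ ?_ ?_
    · rintro ⟨i, hi⟩ m
      have hi' : i ∈ Submodule.span ℤ {g} := by rwa [← hg]
      obtain ⟨c, hc⟩ := Submodule.mem_span_singleton.mp hi'
      refine ⟨c • m, ?_⟩
      have h2 : (⟨i, hi⟩ : I) = c • G := by
        ext; simp [hG, ← hc, smul_eq_mul]
      rw [h2]
      exact smul_tmul c G m
    · rintro x y ⟨mx, rfl⟩ ⟨my, rfl⟩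
      exact ⟨mx + my, (tmul_add _ _ _).symm⟩
  rw [injective_iff_map_eq_zero]
  intro x hx
  obtain ⟨m, rfl⟩ := surj x
  rw [LinearMap.rTensor_tmul] at hx
  have hx' : g • m = 0 := by
    have h3 := congrArg (TensorProduct.lid ℤ M) hx
    simp only [TensorProduct.lid_tmul, map_zero] at h3
    exact h3
  rcases smul_eq_zero.mp hx' with h | h
  · have h4 : G = 0 := by ext; simpa [hG] using h
    rw [h4, zero_tmul]
  · rw [h, tmul_zero]

/-- Multiplication by a nonzero integer is injective on `M ⊗ M` when `M` is torsion-free. -/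
theorem liftAux.smul_inj_tensor {M : Type*} [AddCommGroup M] [NoZeroSMulDivisors ℤ M]
    (p : ℤ) (hp : p ≠ 0) {x y : M ⊗[ℤ] M} (hxy : p • x = p • y) : x = y := by
  have hfl : Module.Flat ℤ M := liftAux.flat_of_tf M
  set f : M →ₗ[ℤ] M := LinearMap.lsmul ℤ M p with hf
  have key : ∀ v : M ⊗[ℤ] M, LinearMap.rTensor M f v = p • v := by
    intro v
    refine v.induction_on (by simp) (fun a b => ?_) (fun u w hu hw => ?_)
    · rw [LinearMap.rTensor_tmul, hf, LinearMap.lsmul_apply]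
      exact TensorProduct.smul_tmul' p a b
    · rw [map_add, hu, hw, smul_add]
  have hinj : Function.Injective (LinearMap.rTensor M f) := by
    refine Module.Flat.rTensor_preserves_injective_linearMap _ (fun a b hab => ?_)
    rw [hf] at hab
    simp only [LinearMap.lsmul_apply] at hab
    exact smul_right_injective M hp hab
  exact hinj (by rw [key, key]; exact hxy)

/-- The "logarithmic derivative" sequence attached to a sequence `b`. -/
noncomputable def liftAux.hfun {H : Type*} [Ring H] (b : ℕ → H) : ℕ → H
  | j => (j : ℤ) • b j - ∑ i ∈ (Finset.range j).attach, b (j - i.1) * liftAux.hfun b i.1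
termination_by j => j
decreasing_by exact Finset.mem_range.mp i.2

namespace liftAux

theorem hfun_eq {H : Type*} [Ring H] (b : ℕ → H) (j : ℕ) :
    hfun b j = (j : ℤ) • b j - ∑ i ∈ Finset.range j, b (j - i) * hfun b i := by
  rw [hfun]
  congr 1
  exact Finset.sum_attach (Finset.range j) (fun i => b (j - i) * hfun b i)

theorem hfun_zero {H : Type*} [Ring H] (b : ℕ → H) : hfun b 0 = 0 := by
  rw [hfun_eq]; simp

theorem hfun_sum {H : Type*} [Ring H] (b : ℕ → H) (hb0 : b 0 = 1) (s : ℕ) :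
    (s : ℤ) • b s = ∑ i ∈ Finset.range (s + 1), b (s - i) * hfun b i := by
  rw [Finset.sum_range_succ, Nat.sub_self, hb0, one_mul, hfun_eq]
  abel

theorem tri_swap {M : Type*} [AddCommMonoid M] (j : ℕ) (f : ℕ → ℕ → M) :
    ∑ s ∈ range (j + 1), ∑ i ∈ range (s + 1), f i (s - i)
      = ∑ i ∈ range (j + 1), ∑ u ∈ range (j - i + 1), f i u := by
  induction j with
  | zero => simp
  | succ j ih =>
    rw [Finset.sum_range_succ, ih, Finset.sum_range_succ (fun i => ∑ u ∈ range (j + 1 - i + 1), f i u)]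
    have h1 : ∀ i ∈ range (j + 1), ∑ u ∈ range (j + 1 - i + 1), f i u
        = ∑ u ∈ range (j - i + 1), f i u + f i (j + 1 - i) := by
      intro i hi
      have hij : i ≤ j := Nat.lt_succ_iff.mp (Finset.mem_range.mp hi)
      have e1 : j + 1 - i = (j - i) + 1 := by omega
      rw [e1, Finset.sum_range_succ, ← e1]
    rw [Finset.sum_congr rfl h1, Finset.sum_add_distrib]
    have h2 : j + 1 - (j + 1) = 0 := by omega
    rw [h2, Finset.sum_range_one]
    have h3 : ∑ i ∈ range (j + 1 + 1), f i (j + 1 - i)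
        = ∑ i ∈ range (j + 1), f i (j + 1 - i) + f (j + 1) 0 := by
      rw [Finset.sum_range_succ, Nat.sub_self]
    rw [h3]
    abel

theorem sum_reflect {M : Type*} [AddCommMonoid M] (k : ℕ) (f g : ℕ → M)
    (h : ∀ u ≤ k, f u = g (k - u)) :
    ∑ u ∈ range (k + 1), f u = ∑ u ∈ range (k + 1), g u := by
  have e := Finset.sum_range_reflect g (k + 1)
  rw [← e]
  refine Finset.sum_congr rfl (fun u hu => ?_)
  have hu' : u ≤ k := Nat.lt_succ_iff.mp (Finset.mem_range.mp hu)
  rw [h u hu', show k + 1 - 1 - u = k - u by omega]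

theorem tri_swap' {M : Type*} [AddCommMonoid M] (j : ℕ) (F G : ℕ → ℕ → M)
    (hFG : ∀ s i, i ≤ s → s ≤ j → F s i = G i (s - i)) :
    ∑ s ∈ range (j + 1), ∑ i ∈ range (s + 1), F s i
      = ∑ i ∈ range (j + 1), ∑ u ∈ range (j - i + 1), G i u := by
  rw [← tri_swap j G]
  refine Finset.sum_congr rfl (fun s hs => Finset.sum_congr rfl (fun i hi => ?_))
  exact hFG s i (Nat.lt_succ_iff.mp (Finset.mem_range.mp hi))
    (Nat.lt_succ_iff.mp (Finset.mem_range.mp hs))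

/-- The key computation: if `b 0, …, b (n-1)` is a divided power sequence (with `b n`
playing no role, having defect `c` at stage `n`), then the logarithmic-derivative
sequence `hfun b` consists of primitives up to `n - 1`, and at stage `n` it has
defect `n • c`. -/
theorem lemA {H : Type*} [Ring H] [Coalgebra ℤ H]
    (hmul : ∀ x y : H, comul (R := ℤ) (x * y) = comul (R := ℤ) x * comul (R := ℤ) y)
    (n : ℕ) (hn : 1 ≤ n) (b : ℕ → H) (hb0 : b 0 = 1) (c : H ⊗[ℤ] H)
    (hcom : ∀ m, m ≤ n → comul (R := ℤ) (b m) + (if m = n then c else 0)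
      = ∑ s ∈ Finset.range (m + 1), b s ⊗ₜ[ℤ] b (m - s)) :
    ∀ j, j ≤ n → comul (R := ℤ) (hfun b j) + (if j = n then (n : ℤ) • c else 0)
      = hfun b j ⊗ₜ[ℤ] 1 + 1 ⊗ₜ[ℤ] hfun b j := by
  intro j
  induction j using Nat.strong_induction_on with
  | _ j IH =>
  intro hj
  set h : ℕ → H := hfun b with hh
  set S : ℕ → H ⊗[ℤ] H := fun m => ∑ s ∈ range (m + 1), b s ⊗ₜ[ℤ] b (m - s) with hS
  -- step 1
  have step1 : ∀ i ∈ range j, comul (R := ℤ) (b (j - i) * h i)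
      = S (j - i) * (h i ⊗ₜ[ℤ] 1 + 1 ⊗ₜ[ℤ] h i) := by
    intro i hi
    have hij : i < j := Finset.mem_range.mp hi
    rw [hmul]
    rcases Nat.eq_zero_or_pos i with h0 | hpos
    · rw [h0, hh, hfun_zero, map_zero, mul_zero, zero_tmul, tmul_zero, add_zero, mul_zero]
    · have h5 : j - i ≠ n := by omega
      have h6 : comul (R := ℤ) (b (j - i)) = S (j - i) := by
        have := hcom (j - i) (by omega)
        rwa [if_neg h5, add_zero] at this
      have h7 : comul (R := ℤ) (h i) = h i ⊗ₜ[ℤ] 1 + 1 ⊗ₜ[ℤ] h i := by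
        have := IH i hij (by omega)
        rwa [if_neg (by omega : i ≠ n), add_zero] at this
      rw [h6, h7]
  -- main expansion of comul (h j)
  have main : comul (R := ℤ) (h j)
      = (j : ℤ) • S j - (if j = n then (j : ℤ) • c else 0)
        - ∑ i ∈ range j, S (j - i) * (h i ⊗ₜ[ℤ] 1 + 1 ⊗ₜ[ℤ] h i) := by
    have hbj : comul (R := ℤ) (b j) = S j - (if j = n then c else 0) :=
      eq_sub_of_add_eq (hcom j hj)
    rw [hh, hfun_eq, map_sub, map_smul, map_sum, Finset.sum_congr rfl step1, ← hh, hbj,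
      smul_sub]
    congr 2
    split_ifs with hjn
    · rfl
    · rw [smul_zero]
  -- the key combinatorial identity (★)
  have star : (j : ℤ) • S j = h j ⊗ₜ[ℤ] 1 + 1 ⊗ₜ[ℤ] h j
      + ∑ i ∈ range j, S (j - i) * (h i ⊗ₜ[ℤ] 1 + 1 ⊗ₜ[ℤ] h i) := by
    have eA1 : ∑ s ∈ range (j + 1), ((s : ℤ) • b s) ⊗ₜ[ℤ] b (j - s)
        = ∑ i ∈ range (j + 1), ∑ u ∈ range (j - i + 1), (b u * h i) ⊗ₜ[ℤ] b (j - i - u) := by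
      have e0 : ∀ s ∈ range (j + 1), ((s : ℤ) • b s) ⊗ₜ[ℤ] b (j - s)
          = ∑ i ∈ range (s + 1), (b (s - i) * h i) ⊗ₜ[ℤ] b (j - s) := by
        intro s hs
        rw [hfun_sum b hb0 s, sum_tmul]
      rw [Finset.sum_congr rfl e0]
      refine tri_swap' j _ _ (fun s i his hsj => ?_)
      rw [show j - i - (s - i) = j - s by omega]
    have eA2 : ∑ s ∈ range (j + 1), b s ⊗ₜ[ℤ] (((j - s : ℕ) : ℤ) • b (j - s))
        = ∑ i ∈ range (j + 1), ∑ u ∈ range (j - i + 1), b (j - i - u) ⊗ₜ[ℤ] (b u * h i) := by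
      have e0 : ∑ s ∈ range (j + 1), b s ⊗ₜ[ℤ] (((j - s : ℕ) : ℤ) • b (j - s))
          = ∑ t ∈ range (j + 1), b (j - t) ⊗ₜ[ℤ] ((t : ℤ) • b t) := by
        refine sum_reflect j _ _ (fun u hu => ?_)
        rw [show j - (j - u) = u by omega]
      rw [e0]
      have e1 : ∀ t ∈ range (j + 1), b (j - t) ⊗ₜ[ℤ] ((t : ℤ) • b t)
          = ∑ i ∈ range (t + 1), b (j - t) ⊗ₜ[ℤ] (b (t - i) * h i) := by
        intro t ht
        rw [hfun_sum b hb0 t, tmul_sum]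
      rw [Finset.sum_congr rfl e1]
      refine tri_swap' j _ _ (fun t i hit htj => ?_)
      rw [show j - i - (t - i) = j - t by omega]
    have eB1 : ∀ i : ℕ, S (j - i) * (h i ⊗ₜ[ℤ] 1)
        = ∑ u ∈ range (j - i + 1), (b u * h i) ⊗ₜ[ℤ] b (j - i - u) := by
      intro i
      simp only [hS]
      rw [Finset.sum_mul]
      refine Finset.sum_congr rfl (fun u hu => ?_)
      rw [Algebra.TensorProduct.tmul_mul_tmul, mul_one]
    have eB2 : ∀ i : ℕ, S (j - i) * (1 ⊗ₜ[ℤ] h i)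
        = ∑ u ∈ range (j - i + 1), b (j - i - u) ⊗ₜ[ℤ] (b u * h i) := by
      intro i
      simp only [hS]
      rw [Finset.sum_mul]
      have e1 : ∀ u ∈ range (j - i + 1),
          (b u ⊗ₜ[ℤ] b (j - i - u)) * (1 ⊗ₜ[ℤ] h i) = b u ⊗ₜ[ℤ] (b (j - i - u) * h i) := by
        intro u hu
        rw [Algebra.TensorProduct.tmul_mul_tmul, mul_one]
      rw [Finset.sum_congr rfl e1]
      refine sum_reflect (j - i) _ _ (fun u hu => ?_)
      rw [show j - i - (j - i - u) = u by omega]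
    have eA : (j : ℤ) • S j
        = ∑ i ∈ range (j + 1), ∑ u ∈ range (j - i + 1), (b u * h i) ⊗ₜ[ℤ] b (j - i - u)
        + ∑ i ∈ range (j + 1), ∑ u ∈ range (j - i + 1), b (j - i - u) ⊗ₜ[ℤ] (b u * h i) := by
      rw [hS, Finset.smul_sum]
      have e1 : ∀ s ∈ range (j + 1), (j : ℤ) • (b s ⊗ₜ[ℤ] b (j - s))
          = ((s : ℤ) • b s) ⊗ₜ[ℤ] b (j - s) + b s ⊗ₜ[ℤ] (((j - s : ℕ) : ℤ) • b (j - s)) := by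
        intro s hs
        have hsj : s ≤ j := Nat.lt_succ_iff.mp (Finset.mem_range.mp hs)
        have e2 : (j : ℤ) = (s : ℤ) + ((j - s : ℕ) : ℤ) := by omega
        rw [e2, add_smul]
        exact congrArg₂ (· + ·) (TensorProduct.smul_tmul' _ _ _)
          ((TensorProduct.tmul_smul _ _ _).symm)
      rw [Finset.sum_congr rfl e1, Finset.sum_add_distrib, eA1, eA2]
    have eTj : ∑ u ∈ range (j - j + 1), (b u * h j) ⊗ₜ[ℤ] b (j - j - u) = h j ⊗ₜ[ℤ] 1 := by
      simp only [Nat.sub_self]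
      rw [Finset.sum_range_one, hb0, one_mul]
    have eUj : ∑ u ∈ range (j - j + 1), b (j - j - u) ⊗ₜ[ℤ] (b u * h j) = 1 ⊗ₜ[ℤ] h j := by
      simp only [Nat.sub_self]
      rw [Finset.sum_range_one, hb0, one_mul]
    have eB : ∑ i ∈ range j, S (j - i) * (h i ⊗ₜ[ℤ] 1 + 1 ⊗ₜ[ℤ] h i)
        = ∑ i ∈ range j, ∑ u ∈ range (j - i + 1), (b u * h i) ⊗ₜ[ℤ] b (j - i - u)
        + ∑ i ∈ range j, ∑ u ∈ range (j - i + 1), b (j - i - u) ⊗ₜ[ℤ] (b u * h i) := by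
      rw [← Finset.sum_add_distrib]
      refine Finset.sum_congr rfl (fun i hi => ?_)
      rw [mul_add, eB1, eB2]
    rw [eA, eB, Finset.sum_range_succ, Finset.sum_range_succ
      (fun i => ∑ u ∈ range (j - i + 1), b (j - i - u) ⊗ₜ[ℤ] (b u * h i)), eTj, eUj]
    abel
  have hite : (if j = n then (j : ℤ) • c else 0) = (if j = n then (n : ℤ) • c else 0) := by
    split_ifs with hjn
    · rw [hjn]
    · rfl
  rw [main, star, hite]
  abel

end liftAux

/-- Peeling off primes: if `D w = N • c` for some `N > 0`, we can find `b` with `D b = c`. -/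
theorem liftAux.peel {H : Type*} [Ring H] [Coalgebra ℤ H] [NoZeroSMulDivisors ℤ H]
    (hp : ∀ p : ℕ, p.Prime → ∀ x : H,
      (∃ t : H ⊗[ℤ] H, comul (R := ℤ) x - (x ⊗ₜ[ℤ] 1 + 1 ⊗ₜ[ℤ] x) = (p : ℤ) • t) →
      ∃ y z : H, IsPrimitive y ∧ x = y + (p : ℤ) • z) :
    ∀ N : ℕ, 0 < N → ∀ (c : H ⊗[ℤ] H) (w : H),
      comul (R := ℤ) w = w ⊗ₜ[ℤ] 1 + 1 ⊗ₜ[ℤ] w + (N : ℤ) • c →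
      ∃ b : H, comul (R := ℤ) b = b ⊗ₜ[ℤ] 1 + 1 ⊗ₜ[ℤ] b + c := by
  intro N
  induction N using Nat.strong_induction_on with
  | _ N IH =>
  intro hN c w hw
  rcases eq_or_ne N 1 with h1 | h1
  · refine ⟨w, ?_⟩
    rw [hw, h1]
    norm_num
  · set p := N.minFac with hpdef
    have pp : p.Prime := Nat.minFac_prime h1
    have hpd : p ∣ N := Nat.minFac_dvd N
    set M := N / p with hMdef
    have hNM : N = p * M := (Nat.mul_div_cancel' hpd).symm
    have hM0 : 0 < M := Nat.div_pos (Nat.minFac_le hN) pp.pos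
    have hMlt : M < N := by
      have := pp.two_le
      calc M = N / p := rfl
        _ < N := Nat.div_lt_self hN (by omega)
    have hNc : ((N : ℕ) : ℤ) • c = (p : ℤ) • ((M : ℤ) • c) := by
      rw [smul_smul, ← Nat.cast_mul, ← hNM]
    obtain ⟨y, z, hy, hwz⟩ := hp p pp w ⟨(M : ℤ) • c, by
      rw [hw, add_sub_cancel_left, hNc]⟩
    have h2 : comul (R := ℤ) w = y ⊗ₜ[ℤ] 1 + 1 ⊗ₜ[ℤ] y
        + (p : ℤ) • (z ⊗ₜ[ℤ] 1 + 1 ⊗ₜ[ℤ] z + (M : ℤ) • c) := by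
      rw [hw, hwz, add_tmul, tmul_add, ← TensorProduct.smul_tmul',
        TensorProduct.tmul_smul, hNc, smul_add, smul_add]
      abel
    have h1' : comul (R := ℤ) y + (p : ℤ) • comul (R := ℤ) z = comul (R := ℤ) w := by
      rw [hwz, map_add, map_smul]
    have hy' : comul (R := ℤ) y = y ⊗ₜ[ℤ] 1 + 1 ⊗ₜ[ℤ] y := hy
    have h4 := h1'.trans h2
    rw [hy'] at h4
    have h5 := add_left_cancel h4
    have h6 := liftAux.smul_inj_tensor (p : ℤ) (by exact_mod_cast pp.ne_zero) h5
    exact IH M hMlt hM0 c z h6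

-- The divided power sequence over `x`, built by recursion using choice.
open scoped Classical in
noncomputable def liftAux.seq {H : Type*} [Ring H] [Coalgebra ℤ H] (x : H) : ℕ → H
  | 0 => 1
  | 1 => x
  | (n + 2) =>
    if h : ∃ b : H, comul (R := ℤ) b = b ⊗ₜ[ℤ] 1 + 1 ⊗ₜ[ℤ] b
        + ∑ m ∈ (Finset.range (n + 1)).attach,
            liftAux.seq x (m.1 + 1) ⊗ₜ[ℤ] liftAux.seq x (n + 1 - m.1)
    then h.choose else 0
termination_by n => n
decreasing_by
  all_goals (have := Finset.mem_range.mp m.2; omega)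

namespace liftAux

theorem seq_zero {H : Type*} [Ring H] [Coalgebra ℤ H] (x : H) : seq x 0 = 1 := by rw [seq]

theorem seq_one {H : Type*} [Ring H] [Coalgebra ℤ H] (x : H) : seq x 1 = x := by rw [seq]

open scoped Classical in
theorem seq_two {H : Type*} [Ring H] [Coalgebra ℤ H] (x : H) (n : ℕ) :
    seq x (n + 2) = if h : ∃ b : H, comul (R := ℤ) b = b ⊗ₜ[ℤ] 1 + 1 ⊗ₜ[ℤ] b
        + ∑ m ∈ Finset.range (n + 1), seq x (m + 1) ⊗ₜ[ℤ] seq x (n + 1 - m)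
      then h.choose else 0 := by
  rw [seq]
  simp only [Finset.sum_attach (Finset.range (n + 1))
    (fun m => seq x (m + 1) ⊗ₜ[ℤ] seq x (n + 1 - m))]

end liftAux

/-- Lemma 2.10: if `H` is a torsion-free bialgebra over `ℤ` (a ring with a compatible
`ℤ`-coalgebra structure) and for every prime `p` every primitive element of `H/pH` is
the image of a primitive element of `H`, then every primitive element of `H` is
liftable. -/
theorem liftable_of_primitives_surject_mod_p
    (H : Type*) [Ring H] [Coalgebra ℤ H] [NoZeroSMulDivisors ℤ H]
    -- `H` is a bialgebra: comultiplication and counit are ring homomorphisms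
    (hcomul_one : comul (R := ℤ) (1 : H) = 1)
    (hcomul_mul : ∀ x y : H, comul (R := ℤ) (x * y) = comul (R := ℤ) x * comul (R := ℤ) y)
    (hcounit_one : counit (R := ℤ) (1 : H) = 1)
    (hcounit_mul : ∀ x y : H, counit (R := ℤ) (x * y) = counit (R := ℤ) x * counit (R := ℤ) y)
    -- primitive elements of `H/pH` lift to primitive elements of `H`
    (hp : ∀ p : ℕ, p.Prime → ∀ x : H,
      (∃ t : H ⊗[ℤ] H, comul (R := ℤ) x - (x ⊗ₜ[ℤ] 1 + 1 ⊗ₜ[ℤ] x) = (p : ℤ) • t) →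
      ∃ y z : H, IsPrimitive y ∧ x = y + (p : ℤ) • z) :
    ∀ x : H, IsPrimitive x → Liftable x := by
  intro x hx
  have key : ∀ n : ℕ, comul (R := ℤ) (liftAux.seq x n)
      = ∑ m ∈ Finset.range (n + 1), liftAux.seq x m ⊗ₜ[ℤ] liftAux.seq x (n - m) := by
    intro n
    induction n using Nat.strong_induction_on with
    | _ n IH =>
    match n with
    | 0 =>
      rw [liftAux.seq_zero, hcomul_one, Finset.sum_range_one, liftAux.seq_zero]
      rw [Algebra.TensorProduct.one_def]
    | 1 =>
      rw [liftAux.seq_one, hx]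
      rw [Finset.sum_range_succ, Finset.sum_range_one, liftAux.seq_zero, liftAux.seq_one]
      abel
    | (k + 2) =>
      set N := k + 2 with hN
      set C : H ⊗[ℤ] H := ∑ m ∈ Finset.range (k + 1),
        liftAux.seq x (m + 1) ⊗ₜ[ℤ] liftAux.seq x (k + 1 - m) with hC
      set b : ℕ → H := fun m => if m = N then 0 else liftAux.seq x m with hb
      have hbv : ∀ m, b m = if m = N then 0 else liftAux.seq x m := fun m => rfl
      have hb0 : b 0 = 1 := by
        rw [hbv, if_neg (by omega), liftAux.seq_zero]
      have hbN : b N = 0 := by rw [hbv, if_pos rfl]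
      have hcom : ∀ m, m ≤ N → comul (R := ℤ) (b m) + (if m = N then C else 0)
          = ∑ s ∈ Finset.range (m + 1), b s ⊗ₜ[ℤ] b (m - s) := by
        intro m hm
        rcases eq_or_ne m N with hmN | hne
        · rw [hmN, if_pos rfl, hbN, map_zero, zero_add]
          rw [Finset.sum_range_succ, Nat.sub_self, hbN, zero_tmul, add_zero]
          rw [Finset.sum_range_succ']
          have hb0N : b 0 ⊗ₜ[ℤ] b (N - 0) = 0 := by
            rw [Nat.sub_zero, hbN, tmul_zero]
          rw [hb0N, add_zero, hC]
          refine (Finset.sum_congr rfl (fun i hi => ?_)).symm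
          have hik : i ≤ k := Nat.lt_succ_iff.mp (Finset.mem_range.mp hi)
          have e1 : b (i + 1) = liftAux.seq x (i + 1) := by
            rw [hbv, if_neg (by omega)]
          have e2 : b (N - (i + 1)) = liftAux.seq x (k + 1 - i) := by
            rw [hbv, if_neg (by omega), show N - (i + 1) = k + 1 - i by omega]
          rw [e1, e2]
        · have hm' : m < N := lt_of_le_of_ne hm hne
          rw [if_neg hne, add_zero]
          have hbm : b m = liftAux.seq x m := by
            rw [hbv, if_neg hne]
          rw [hbm, IH m hm']
          refine Finset.sum_congr rfl (fun s hs => ?_)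
          have hs' : s ≤ m := Nat.lt_succ_iff.mp (Finset.mem_range.mp hs)
          have e1 : b s = liftAux.seq x s := by
            rw [hbv, if_neg (by omega)]
          have e2 : b (m - s) = liftAux.seq x (m - s) := by
            rw [hbv, if_neg (by omega)]
          rw [e1, e2]
      have hlem := liftAux.lemA hcomul_mul N (by omega) b hb0 C hcom N le_rfl
      rw [if_pos rfl] at hlem
      set w : H := - liftAux.hfun b N with hw
      have hcw : comul (R := ℤ) w = w ⊗ₜ[ℤ] 1 + 1 ⊗ₜ[ℤ] w + (N : ℤ) • C := by
        rw [hw, map_neg, eq_sub_of_add_eq hlem, neg_tmul, tmul_neg]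
        abel
      obtain ⟨bb, hbb⟩ := liftAux.peel hp N (by omega) C w hcw
      have hex : ∃ b' : H, comul (R := ℤ) b' = b' ⊗ₜ[ℤ] 1 + 1 ⊗ₜ[ℤ] b'
          + ∑ m ∈ Finset.range (k + 1), liftAux.seq x (m + 1) ⊗ₜ[ℤ] liftAux.seq x (k + 1 - m) :=
        ⟨bb, by rw [hbb, hC]⟩
      have hseqN : comul (R := ℤ) (liftAux.seq x (k + 2))
          = liftAux.seq x (k + 2) ⊗ₜ[ℤ] 1 + 1 ⊗ₜ[ℤ] liftAux.seq x (k + 2) + C := by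
        rw [liftAux.seq_two x k, dif_pos hex]
        rw [hC]
        exact hex.choose_spec
      rw [hseqN]
      rw [Finset.sum_range_succ, Finset.sum_range_succ']
      have e1 : liftAux.seq x 0 ⊗ₜ[ℤ] liftAux.seq x (k + 2 - 0)
          = 1 ⊗ₜ[ℤ] liftAux.seq x (k + 2) := by
        rw [liftAux.seq_zero, Nat.sub_zero]
      have e2 : liftAux.seq x (k + 2) ⊗ₜ[ℤ] liftAux.seq x (k + 2 - (k + 2))
          = liftAux.seq x (k + 2) ⊗ₜ[ℤ] 1 := by
        rw [Nat.sub_self, liftAux.seq_zero]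
      rw [e1, e2]
      have e3 : ∑ i ∈ Finset.range (k + 1),
          liftAux.seq x (i + 1) ⊗ₜ[ℤ] liftAux.seq x (k + 2 - (i + 1)) = C := by
        rw [hC]
        refine Finset.sum_congr rfl (fun i hi => ?_)
        rw [show k + 2 - (i + 1) = k + 1 - i by omega]
      rw [e3]
      abel
  exact ⟨liftAux.seq x, liftAux.seq_zero x, liftAux.seq_one x, key⟩
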